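/- arXiv:2308.10591 — 8 statements merged into one kernel-verified Lean document; each statement's English description precedes it below -/
import Mathlib

section
/- Let n, m ≥ 1 and let A_1, …, A_m ∈ ℝ^{n×n} be Hurwitz matrices (every eigenvalue of each A_q has negative real part). Suppose there exists an invertible matrix T ∈ ℂ^{n×n} such that T⁻¹ A_q T is upper triangular for every q ∈ {1,…,m}. Then there exists a Hermitian positive definite matrix P ∈ ℂ^{n×n} such that A_qᴴ P + P A_q is negative definite for every q ∈ {1,…,m} (a common quadratic Lyapunov function for the family). -/
open Matrix
open scoped ComplexOrder

noncomputable section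

/-- Entrywise coercion of a real matrix to a complex matrix. -/
def mapC {n m : ℕ} (A : Matrix (Fin n) (Fin m) ℝ) : Matrix (Fin n) (Fin m) ℂ :=
  A.map (fun x => (x : ℂ))

/-- A real square matrix is Hurwitz if all of its complex eigenvalues have
negative real part. -/
def IsHurwitz {n : ℕ} (A : Matrix (Fin n) (Fin n) ℝ) : Prop :=
  ∀ μ ∈ spectrum ℂ (mapC A), μ.re < 0

/-!
The diagonal entries of `U_q = T⁻¹ A_q T` are eigenvalues of `A_q`, so their real parts are
negative. Conjugating by `S = diag(t^k)` multiplies the entry `(i, j)` of `U_q` by `t^(j-i)`,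
so as `t → 0` each `W_q = S⁻¹ U_q S` tends to its diagonal. For small `t` the Hermitian
matrices `-(W_qᴴ + W_q)` are then strictly diagonally dominant with positive diagonal, hence
positive definite by Gershgorin's theorem. With `R = T S`, `P = R⁻ᴴ R⁻¹` is a common Lyapunov
matrix, since `A_qᴴ P + P A_q = R⁻ᴴ (W_qᴴ + W_q) R⁻¹`.
-/

open Filter Topology Finset

namespace Matrix

section Spectrum

variable {n : Type*} [Fintype n] [DecidableEq n]

theorem spectrum_nonsing_inv_mul_mul {α : Type*} [CommRing α] {T : Matrix n n α}
    (hT : IsUnit T) (M : Matrix n n α) : spectrum α (T⁻¹ * M * T) = spectrum α M := by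
  simpa [coe_units_inv] using spectrum.units_conjugate' (R := α) (a := M) (u := hT.unit)

theorem IsUpperTriangular.diag_mem_spectrum [LinearOrder n] {K : Type*} [Field K]
    {M : Matrix n n K} (hM : M.IsUpperTriangular) (i : n) : M i i ∈ spectrum K M := by
  refine mem_spectrum_of_isRoot_charpoly ?_
  rw [charpoly_of_isUpperTriangular M hM, Polynomial.isRoot_prod]
  exact ⟨i, mem_univ i, by simp⟩

end Spectrum

section PosDef

variable {𝕜 n : Type*} [RCLike 𝕜] [Fintype n] [DecidableEq n]

theorem IsHermitian.posDef_of_sum_norm_lt_re_diag {H : Matrix n n 𝕜} (hH : H.IsHermitian)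
    (hdom : ∀ i, ∑ j ∈ univ.erase i, ‖H i j‖ < RCLike.re (H i i)) : H.PosDef := by
  refine hH.posDef_iff_eigenvalues_pos.mpr fun i => ?_
  have hev : Module.End.HasEigenvalue (toLin' H) (hH.eigenvalues i : 𝕜) := by
    rw [Module.End.hasEigenvalue_iff_mem_spectrum, spectrum_toLin']
    exact spectrum.algebraMap_mem 𝕜 (hH.eigenvalues_mem_spectrum_real i)
  obtain ⟨k, hk⟩ := eigenvalue_mem_ball hev
  rw [Metric.mem_closedBall, dist_comm, dist_eq_norm] at hk
  have hre : RCLike.re (H k k) - hH.eigenvalues i ≤ ∑ j ∈ univ.erase k, ‖H k j‖ := by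
    simpa using (RCLike.re_le_norm (H k k - hH.eigenvalues i)).trans hk
  linarith [hdom k]

theorem posDef_neg_lyapunov_of_conj {A R : Matrix n n 𝕜} (hR : IsUnit R)
    (h : (-((R⁻¹ * A * R)ᴴ + R⁻¹ * A * R)).PosDef) :
    (-(Aᴴ * (R⁻¹ᴴ * R⁻¹) + R⁻¹ᴴ * R⁻¹ * A)).PosDef := by
  have hR' : IsUnit R⁻¹ := isUnit_nonsing_inv_iff.mpr hR
  have hRR : R * R⁻¹ = 1 := mul_nonsing_inv R ((isUnit_iff_isUnit_det R).mp hR)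
  have hRR' : R⁻¹ᴴ * Rᴴ = 1 := by rw [← conjTranspose_mul, hRR, conjTranspose_one]
  have hcongr : R⁻¹ᴴ * (-((R⁻¹ * A * R)ᴴ + R⁻¹ * A * R)) * R⁻¹
      = -(Aᴴ * (R⁻¹ᴴ * R⁻¹) + R⁻¹ᴴ * R⁻¹ * A) := by
    simp only [conjTranspose_mul, Matrix.mul_neg, Matrix.neg_mul, Matrix.mul_add,
      Matrix.add_mul, Matrix.mul_assoc, hRR, Matrix.mul_one]
    simp only [← Matrix.mul_assoc, hRR', Matrix.one_mul]
  rw [← hcongr]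
  exact h.conjTranspose_mul_mul_same (mulVec_injective_iff_isUnit.mpr hR')

end PosDef

section DiagonalScaling

variable {K : Type*} [NontriviallyNormedField K] {n : ℕ}

theorem inv_diagonal_pow {t : K} (ht : t ≠ 0) :
    (diagonal fun k : Fin n => t ^ (k : ℕ))⁻¹ = diagonal fun k : Fin n => t⁻¹ ^ (k : ℕ) :=
  inv_eq_left_inv <| by simp [diagonal_mul_diagonal, ht]

theorem IsUpperTriangular.tendsto_conj_diagonal_pow {U : Matrix (Fin n) (Fin n) K}
    (hU : U.IsUpperTriangular) :
    Tendsto (fun t : K => (diagonal fun k : Fin n => t ^ (k : ℕ))⁻¹ * U *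
      diagonal fun k : Fin n => t ^ (k : ℕ)) (𝓝[≠] 0) (𝓝 (diagonal U.diag)) := by
  refine tendsto_pi_nhds.mpr fun i => tendsto_pi_nhds.mpr fun j => ?_
  rcases lt_or_ge j i with hji | hij
  · simp [inv_diagonal, diagonal_mul, mul_diagonal, hU hji, (ne_of_lt hji).symm]
  · have hlim : Tendsto (fun t : K => U i j * t ^ ((j : ℕ) - i)) (𝓝[≠] 0)
        (𝓝 (diagonal U.diag i j)) := by
      refine tendsto_nhdsWithin_of_tendsto_nhds ?_
      convert ((continuous_pow _).const_mul _).tendsto (0 : K) using 2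
      rcases eq_or_ne i j with rfl | hne
      · simp
      · have : (i : ℕ) < j := lt_of_le_of_ne hij (Fin.val_ne_of_ne hne)
        simp [hne, Nat.sub_ne_zero_of_lt this]
    refine hlim.congr' (eventually_nhdsWithin_of_forall fun t (ht : t ≠ 0) => ?_)
    obtain ⟨d, hd⟩ := Nat.exists_eq_add_of_le (show (i : ℕ) ≤ j from hij)
    simp only [inv_diagonal_pow ht, diagonal_mul, mul_diagonal, hd, Nat.add_sub_cancel_left,
      pow_add, inv_pow]
    field_simp

end DiagonalScaling

theorem exists_isUnit_posDef_neg_conj_add_conjTranspose {𝕜 ι : Type*} [RCLike 𝕜] [Finite ι]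
    {n : ℕ} {U : ι → Matrix (Fin n) (Fin n) 𝕜} (hU : ∀ q, (U q).IsUpperTriangular)
    (hdiag : ∀ q i, RCLike.re (U q i i) < 0) :
    ∃ S : Matrix (Fin n) (Fin n) 𝕜, IsUnit S ∧
      ∀ q, (-((S⁻¹ * U q * S)ᴴ + S⁻¹ * U q * S)).PosDef := by
  set S := fun t : 𝕜 => diagonal fun k : Fin n => t ^ (k : ℕ)
  set margin := fun (i : Fin n) (H : Matrix (Fin n) (Fin n) 𝕜) =>
    RCLike.re (H i i) - ∑ j ∈ univ.erase i, ‖H i j‖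
  have hcont (i : Fin n) : Continuous (margin i) := by fun_prop
  have hlim (q : ι) : Tendsto (fun t => -(((S t)⁻¹ * U q * S t)ᴴ + (S t)⁻¹ * U q * S t))
      (𝓝[≠] 0) (𝓝 (-((diagonal (U q).diag)ᴴ + diagonal (U q).diag))) :=
    ((hU q).tendsto_conj_diagonal_pow.star.add (hU q).tendsto_conj_diagonal_pow).neg
  have hmargin (q : ι) (i : Fin n) :
      0 < margin i (-((diagonal (U q).diag)ᴴ + diagonal (U q).diag)) := by
    have hoff : ∑ j ∈ univ.erase i,
        ‖(-((diagonal (U q).diag)ᴴ + diagonal (U q).diag)) i j‖ = 0 := by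
      refine sum_eq_zero fun j hj => ?_
      simp [diagonal_apply_ne _ (ne_of_mem_erase hj).symm]
    simp only [margin, hoff, sub_zero]
    simpa using hdiag q i
  have hev : ∀ᶠ t in 𝓝[≠] (0 : 𝕜),
      ∀ q i, 0 < margin i (-(((S t)⁻¹ * U q * S t)ᴴ + (S t)⁻¹ * U q * S t)) :=
    eventually_all.mpr fun q => eventually_all.mpr fun i =>
      ((hcont i).tendsto _ |>.comp (hlim q)).eventually (lt_mem_nhds (hmargin q i))
  obtain ⟨t, hdom, ht⟩ := (hev.and self_mem_nhdsWithin).exists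
  refine ⟨S t, ?_, fun q => ?_⟩
  · exact isUnit_diagonal.mpr (Pi.isUnit_iff.mpr fun k => (isUnit_iff_ne_zero.mpr ht).pow _)
  · exact (isHermitian_transpose_add_self _).neg.posDef_of_sum_norm_lt_re_diag
      fun i => sub_pos.mp (hdom q i)

end Matrix

theorem IsHurwitz.re_diag_neg_of_isUpperTriangular_conj {n : ℕ} {A : Matrix (Fin n) (Fin n) ℝ}
    (hA : IsHurwitz A) {T : Matrix (Fin n) (Fin n) ℂ} (hT : IsUnit T)
    (hU : (T⁻¹ * mapC A * T).IsUpperTriangular) (i : Fin n) : ((T⁻¹ * mapC A * T) i i).re < 0 :=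
  hA _ (spectrum_nonsing_inv_mul_mul hT (mapC A) ▸ hU.diag_mem_spectrum i)

theorem simultaneous_triangularization_common_lyapunov_general
    {n m : ℕ}
    (A : Fin m → Matrix (Fin n) (Fin n) ℝ)
    (hHurwitz : ∀ q, IsHurwitz (A q))
    (T : Matrix (Fin n) (Fin n) ℂ) (hT : IsUnit T)
    (htri : ∀ q, ∀ i j : Fin n, j < i → (T⁻¹ * mapC (A q) * T) i j = 0) :
    ∃ P : Matrix (Fin n) (Fin n) ℂ, P.PosDef ∧
      ∀ q, (-((mapC (A q))ᴴ * P + P * mapC (A q))).PosDef := by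
  have hU (q : Fin m) : (T⁻¹ * mapC (A q) * T).IsUpperTriangular := fun i j h => htri q i j h
  obtain ⟨S, hS, hW⟩ := exists_isUnit_posDef_neg_conj_add_conjTranspose hU
    fun q => (hHurwitz q).re_diag_neg_of_isUpperTriangular_conj hT (hU q)
  have hR : IsUnit (T * S) := hT.mul hS
  refine ⟨(T * S)⁻¹ᴴ * (T * S)⁻¹,
    .conjTranspose_mul_self _ (mulVec_injective_iff_isUnit.mpr (isUnit_nonsing_inv_iff.mpr hR)),
    fun q => posDef_neg_lyapunov_of_conj hR ?_⟩
  simpa only [Matrix.mul_inv_rev, Matrix.mul_assoc] using hW q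

/-- If the Hurwitz matrices `A 1, …, A m` are simultaneously triangularizable by an
invertible complex matrix `T`, then they admit a common quadratic Lyapunov function:
a Hermitian positive definite `P` with `A_qᴴ P + P A_q` negative definite for all `q`. -/
theorem simultaneous_triangularization_common_lyapunov
    {n m : ℕ} (hn : 1 ≤ n) (hm : 1 ≤ m)
    (A : Fin m → Matrix (Fin n) (Fin n) ℝ)
    (hHurwitz : ∀ q, IsHurwitz (A q))
    (T : Matrix (Fin n) (Fin n) ℂ) (hT : IsUnit T)
    (htri : ∀ q, ∀ i j : Fin n, j < i → (T⁻¹ * mapC (A q) * T) i j = 0) :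
    ∃ P : Matrix (Fin n) (Fin n) ℂ, P.PosDef ∧
      ∀ q, (-((mapC (A q))ᴴ * P + P * mapC (A q))).PosDef :=
  simultaneous_triangularization_common_lyapunov_general A hHurwitz T hT htri
end
end

section
/- Let A_1, A_2 ∈ ℝ^{n×n} and B_1, B_2 ∈ ℝ^{n×p}, and let D ⊆ {(λ,μ) ∈ ℂ×ℂ : Re λ < 0 and Re μ < 0}. If the pairs (A_1,B_1) and (A_2,B_2) are feedback rectifiable over D, then there exist F_1, F_2 ∈ ℝ^{p×n} and a Hermitian positive definite matrix P ∈ ℂ^{n×n} such that (A_q + B_q F_q)ᴴ P + P (A_q + B_q F_q) is negative definite for q = 1, 2 (i.e. the closed-loop subsystems admit a common quadratic Lyapunov function, so the switched closed-loop system is asymptotically stable for arbitrary switching). -/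
open Matrix
open scoped ComplexOrder

noncomputable section

/-- The pairs `(A₁,B₁)` and `(A₂,B₂)` are feedback rectifiable over `D ⊆ ℂ × ℂ`. -/
def FeedbackRectifiable {n p : ℕ} (A₁ A₂ : Matrix (Fin n) (Fin n) ℝ)
    (B₁ B₂ : Matrix (Fin n) (Fin p) ℝ) (D : Set (ℂ × ℂ)) : Prop :=
  ∃ (F₁ F₂ : Matrix (Fin p) (Fin n) ℝ) (lm : Fin n → ℂ × ℂ) (v : Fin n → Fin n → ℂ),
    (∀ i, lm i ∈ D) ∧ LinearIndependent ℂ v ∧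
    (∀ i, (mapC (A₁ + B₁ * F₁)).mulVec (v i) = (lm i).1 • v i) ∧
    (∀ i, (mapC (A₂ + B₂ * F₂)).mulVec (v i) = (lm i).2 • v i)

/-!
If every closed-loop matrix is diagonalised by the same eigenbasis `v`, with eigenvalues in the
open left half-plane, let `V = (of v)ᵀ` be the matrix with columns `v i`. Then
`P = V⁻¹ᴴ V⁻¹` (`coordGram v`), i.e. `x ↦ ‖V⁻¹ x‖²`, is a common quadratic Lyapunov function:
with `W = V⁻¹`, each closed-loop matrix `M` satisfies `W M = diag l W`, so
`Mᴴ P + P M = Wᴴ diag (2 Re l) W`.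
-/

namespace Matrix

variable {ι 𝕜 : Type*} [Fintype ι] [DecidableEq ι] [RCLike 𝕜]

theorem mul_eq_mul_diagonal_of_mulVec_eq_smul {M : Matrix ι ι 𝕜} {v : ι → ι → 𝕜} {l : ι → 𝕜}
    (h : ∀ i, M *ᵥ v i = l i • v i) : M * (of v)ᵀ = (of v)ᵀ * diagonal l := by
  ext i j
  rw [mul_diagonal, mul_apply]
  simpa [mulVec, dotProduct, mul_comm (v j i)] using congrFun (h j) i

theorem conjTranspose_mul_add_mul_eq_of_mul_eq_diagonal_mul {M W : Matrix ι ι 𝕜} {l : ι → 𝕜}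
    (h : W * M = diagonal l * W) :
    Mᴴ * (Wᴴ * W) + Wᴴ * W * M =
      Wᴴ * diagonal (fun i => ((2 * RCLike.re (l i) : ℝ) : 𝕜)) * W := by
  have hdiag : diagonal (fun i => ((2 * RCLike.re (l i) : ℝ) : 𝕜))
      = (diagonal l)ᴴ + diagonal l := by
    rw [diagonal_conjTranspose, diagonal_add]
    congr 1
    ext i
    push_cast
    exact (RCLike.add_conj (l i)).symm.trans (add_comm _ _)
  calc Mᴴ * (Wᴴ * W) + Wᴴ * W * M
      = (W * M)ᴴ * W + Wᴴ * (W * M) := by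
        rw [conjTranspose_mul, Matrix.mul_assoc, Matrix.mul_assoc, ← Matrix.mul_assoc Mᴴ]
    _ = _ := by
        rw [h, hdiag, conjTranspose_mul, Matrix.mul_add, Matrix.add_mul, Matrix.mul_assoc,
          Matrix.mul_assoc]

theorem posDef_neg_lyapunov_of_mul_eq_diagonal_mul {M W : Matrix ι ι 𝕜} {l : ι → 𝕜}
    (hW : Function.Injective W.mulVec) (h : W * M = diagonal l * W)
    (hl : ∀ i, RCLike.re (l i) < 0) :
    (-(Mᴴ * (Wᴴ * W) + Wᴴ * W * M)).PosDef := by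
  rw [conjTranspose_mul_add_mul_eq_of_mul_eq_diagonal_mul h, ← Matrix.neg_mul, ← Matrix.mul_neg,
    diagonal_neg]
  refine PosDef.conjTranspose_mul_mul_same (posDef_diagonal_iff.mpr fun i => ?_) hW
  rw [← RCLike.ofReal_neg, RCLike.ofReal_pos]
  linarith [hl i]

def coordGram (v : ι → ι → 𝕜) : Matrix ι ι 𝕜 := ((of v)ᵀ⁻¹)ᴴ * (of v)ᵀ⁻¹

theorem injective_mulVec_inv_transpose_of_linearIndependent {v : ι → ι → 𝕜}
    (hv : LinearIndependent 𝕜 v) : Function.Injective ((of v)ᵀ⁻¹).mulVec :=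
  mulVec_injective_iff_isUnit.mpr <|
    isUnit_nonsing_inv_iff.mpr <| linearIndependent_cols_iff_isUnit.mp hv

theorem posDef_coordGram {v : ι → ι → 𝕜} (hv : LinearIndependent 𝕜 v) : (coordGram v).PosDef :=
  PosDef.conjTranspose_mul_self _ (injective_mulVec_inv_transpose_of_linearIndependent hv)

theorem posDef_neg_lyapunov_coordGram {M : Matrix ι ι 𝕜} {v : ι → ι → 𝕜} {l : ι → 𝕜}
    (hv : LinearIndependent 𝕜 v) (h : ∀ i, M *ᵥ v i = l i • v i)
    (hl : ∀ i, RCLike.re (l i) < 0) :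
    (-(Mᴴ * coordGram v + coordGram v * M)).PosDef := by
  have hV : IsUnit (of v)ᵀ.det :=
    (isUnit_iff_isUnit_det _).mp (linearIndependent_cols_iff_isUnit.mp hv)
  have hM : (of v)ᵀ⁻¹ * M = diagonal l * (of v)ᵀ⁻¹ := by
    rw [← Matrix.mul_nonsing_inv_cancel_right _ M hV, mul_eq_mul_diagonal_of_mulVec_eq_smul h,
      ← Matrix.mul_assoc, ← Matrix.mul_assoc, nonsing_inv_mul _ hV, Matrix.one_mul]
  exact posDef_neg_lyapunov_of_mul_eq_diagonal_mul
    (injective_mulVec_inv_transpose_of_linearIndependent hv) hM hl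

end Matrix

/-- Feedback rectifiability over a set of eigenvalue pairs with negative real parts
yields feedback matrices and a common quadratic Lyapunov function for the closed-loop
subsystems. -/
theorem feedback_rectifiable_common_lyapunov
    {n p : ℕ} (A₁ A₂ : Matrix (Fin n) (Fin n) ℝ) (B₁ B₂ : Matrix (Fin n) (Fin p) ℝ)
    (D : Set (ℂ × ℂ)) (hD : ∀ d ∈ D, d.1.re < 0 ∧ d.2.re < 0)
    (hrect : FeedbackRectifiable A₁ A₂ B₁ B₂ D) :
    ∃ (F₁ F₂ : Matrix (Fin p) (Fin n) ℝ) (P : Matrix (Fin n) (Fin n) ℂ), P.PosDef ∧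
      (-((mapC (A₁ + B₁ * F₁))ᴴ * P + P * mapC (A₁ + B₁ * F₁))).PosDef ∧
      (-((mapC (A₂ + B₂ * F₂))ᴴ * P + P * mapC (A₂ + B₂ * F₂))).PosDef := by
  obtain ⟨F₁, F₂, lm, v, hmem, hv, h₁, h₂⟩ := hrect
  exact ⟨F₁, F₂, coordGram v, posDef_coordGram hv,
    posDef_neg_lyapunov_coordGram hv h₁ fun i => (hD _ (hmem i)).1,
    posDef_neg_lyapunov_coordGram hv h₂ fun i => (hD _ (hmem i)).2⟩
end
end

section
/- Let A_1, A_2 ∈ ℝ^{n×n}, B_1, B_2 ∈ ℝ^{n×p}, and let D ⊆ ℝ×ℝ. Then the pairs (A_1,B_1) and (A_2,B_2) are feedback rectifiable over D if and only if the ℝ-linear span of the union over (λ,μ) ∈ D of the subspaces V^ℝ_{A_1,B_1}(λ) ∩ V^ℝ_{A_2,B_2}(μ) equals ℝ^n. -/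
open Matrix

noncomputable section

/-- `V^ℝ_{A,B}(λ) = {v ∈ ℝ^n : (λI − A)v ∈ range B}`. -/
def VspR {n p : ℕ} (A : Matrix (Fin n) (Fin n) ℝ) (B : Matrix (Fin n) (Fin p) ℝ) (l : ℝ) :
    Submodule ℝ (Fin n → ℝ) :=
  Submodule.comap (l • (1 : Matrix (Fin n) (Fin n) ℝ) - A).mulVecLin
    (LinearMap.range B.mulVecLin)

/-!
A vector `w` lies in `V_{A,B}(λ)` exactly when some feedback `F` makes it a `λ`-eigenvector of
`A + BF`, and on a basis the feedback can be prescribed vector by vector. So rectifiability over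
real pairs amounts to a basis of `ℝⁿ` drawn from the sets `V_{A₁,B₁}(λ) ∩ V_{A₂,B₂}(μ)`.
The complex eigenvectors allowed in the definition change nothing: since `A + BF` is real and the
eigenvalues are real, the real and imaginary parts of a complex eigenvector are real eigenvectors,
and they span `ℝⁿ` whenever the complex eigenvectors span `ℂⁿ`.
-/

open Submodule Set

section Complexification

variable {m n : ℕ}

lemma mapC_mulVec_ofReal_comp (M : Matrix (Fin n) (Fin m) ℝ) (w : Fin m → ℝ) :
    mapC M *ᵥ (Complex.ofReal ∘ w) = Complex.ofReal ∘ (M *ᵥ w) :=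
  funext fun i => (Complex.ofRealHom.map_mulVec M w i).symm

lemma re_comp_mapC_mulVec (M : Matrix (Fin n) (Fin m) ℝ) (z : Fin m → ℂ) :
    Complex.re ∘ (mapC M *ᵥ z) = M *ᵥ (Complex.re ∘ z) := by
  funext i
  simp [mapC, mulVec, dotProduct, Complex.re_sum]

lemma im_comp_mapC_mulVec (M : Matrix (Fin n) (Fin m) ℝ) (z : Fin m → ℂ) :
    Complex.im ∘ (mapC M *ᵥ z) = M *ᵥ (Complex.im ∘ z) := by
  funext i
  simp [mapC, mulVec, dotProduct, Complex.im_sum]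

variable {M : Matrix (Fin n) (Fin n) ℝ} {l : ℝ}

lemma mapC_mulVec_ofReal_comp_of_mulVec_eq {w : Fin n → ℝ} (h : M *ᵥ w = l • w) :
    mapC M *ᵥ (Complex.ofReal ∘ w) = (l : ℂ) • (Complex.ofReal ∘ w) := by
  rw [mapC_mulVec_ofReal_comp, h]
  funext i
  simp

lemma mulVec_re_comp_of_mapC_mulVec_eq {z : Fin n → ℂ} (h : mapC M *ᵥ z = (l : ℂ) • z) :
    M *ᵥ (Complex.re ∘ z) = l • (Complex.re ∘ z) := by
  rw [← re_comp_mapC_mulVec, h]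
  funext i
  simp

lemma mulVec_im_comp_of_mapC_mulVec_eq {z : Fin n → ℂ} (h : mapC M *ᵥ z = (l : ℂ) • z) :
    M *ᵥ (Complex.im ∘ z) = l • (Complex.im ∘ z) := by
  rw [← im_comp_mapC_mulVec, h]
  funext i
  simp

lemma span_eq_top_of_re_im_mem {ι : Type*} [Fintype ι] {v : ι → Fin n → ℂ}
    (hv : span ℂ (range v) = ⊤) {S : Set (Fin n → ℝ)}
    (hS : ∀ i, Complex.re ∘ v i ∈ S ∧ Complex.im ∘ v i ∈ S) : span ℝ S = ⊤ := by
  refine eq_top_iff.2 fun x _ => ?_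
  obtain ⟨c, hc⟩ := (mem_span_range_iff_exists_fun ℂ).1 (hv ▸ mem_top : Complex.ofReal ∘ x ∈ _)
  have hx : x = ∑ i, ((c i).re • (Complex.re ∘ v i) - (c i).im • (Complex.im ∘ v i)) := by
    funext j
    simpa [Finset.sum_apply, Complex.re_sum] using (congrArg Complex.re (congrFun hc j)).symm
  rw [hx]
  exact sum_mem fun i _ =>
    sub_mem (smul_mem _ _ (subset_span (hS i).1)) (smul_mem _ _ (subset_span (hS i).2))

end Complexification

lemma LinearIndependent.map_ringHom_comp {K L ι : Type*} [Field K] [Field L] [Fintype ι]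
    [DecidableEq ι] {w : ι → ι → K} (h : LinearIndependent K w) (f : K →+* L) :
    LinearIndependent L fun i => f ∘ w i :=
  linearIndependent_rows_iff_isUnit.2
    (((linearIndependent_rows_iff_isUnit (A := of w)).1 h).map f.mapMatrix)

lemma exists_basis_forall_mem_of_span_eq_top {K : Type*} [Field K] {n : ℕ}
    {S : Set (Fin n → K)} (h : span K S = ⊤) :
    ∃ b : Module.Basis (Fin n) K (Fin n → K), ∀ i, b i ∈ S := by
  let b := Module.Basis.ofSpan h.ge
  refine ⟨b.reindex (b.indexEquiv (Pi.basisFun K (Fin n))), fun i => ?_⟩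
  rw [Module.Basis.reindex_apply]
  exact Module.Basis.ofSpan_subset h.ge (mem_range_self _)

section Feedback

variable {n p : ℕ} {A : Matrix (Fin n) (Fin n) ℝ} {B : Matrix (Fin n) (Fin p) ℝ}

lemma mem_VspR_iff {l : ℝ} {w : Fin n → ℝ} : w ∈ VspR A B l ↔ ∃ u, B *ᵥ u = l • w - A *ᵥ w := by
  simp [VspR]

lemma mem_VspR_of_mulVec_eq {F : Matrix (Fin p) (Fin n) ℝ} {l : ℝ} {w : Fin n → ℝ}
    (h : (A + B * F) *ᵥ w = l • w) : w ∈ VspR A B l :=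
  mem_VspR_iff.2 ⟨F *ᵥ w, by rw [← h, add_mulVec, ← mulVec_mulVec]; abel⟩

lemma exists_feedback_of_basis_mem_VspR {ι : Type*} (b : Module.Basis ι ℝ (Fin n → ℝ))
    (l : ι → ℝ) (h : ∀ i, b i ∈ VspR A B (l i)) :
    ∃ F : Matrix (Fin p) (Fin n) ℝ, ∀ i, (A + B * F) *ᵥ b i = l i • b i := by
  choose u hu using fun i => mem_VspR_iff.1 (h i)
  refine ⟨LinearMap.toMatrix' (b.constr ℝ u), fun i => ?_⟩
  rw [add_mulVec, ← mulVec_mulVec, LinearMap.toMatrix'_mulVec, b.constr_basis, hu]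
  abel

end Feedback

/-- For `D ⊆ ℝ × ℝ`, feedback rectifiability over `D` holds iff the real span of the
union over `(λ,μ) ∈ D` of `V^ℝ_{A₁,B₁}(λ) ∩ V^ℝ_{A₂,B₂}(μ)` is all of `ℝ^n`. -/
theorem feedback_rectifiable_real_iff_span
    {n p : ℕ} (A₁ A₂ : Matrix (Fin n) (Fin n) ℝ) (B₁ B₂ : Matrix (Fin n) (Fin p) ℝ)
    (D : Set (ℝ × ℝ)) :
    FeedbackRectifiable A₁ A₂ B₁ B₂ ((fun x : ℝ × ℝ => ((x.1 : ℂ), (x.2 : ℂ))) '' D) ↔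
    Submodule.span ℝ
      (⋃ d ∈ D, ((VspR A₁ B₁ d.1 ⊓ VspR A₂ B₂ d.2 : Submodule ℝ (Fin n → ℝ)) :
        Set (Fin n → ℝ))) = ⊤ := by
  constructor
  · rintro ⟨F₁, F₂, lm, v, hD, hv, h₁, h₂⟩
    choose d hdD hd using hD
    obtain rfl : lm = fun i => (((d i).1 : ℂ), ((d i).2 : ℂ)) := funext fun i => (hd i).symm
    refine span_eq_top_of_re_im_mem (hv.span_eq_top_of_card_eq_finrank' (by simp)) fun i => ?_
    exact ⟨mem_biUnion (hdD i) ⟨mem_VspR_of_mulVec_eq (mulVec_re_comp_of_mapC_mulVec_eq (h₁ i)),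
        mem_VspR_of_mulVec_eq (mulVec_re_comp_of_mapC_mulVec_eq (h₂ i))⟩,
      mem_biUnion (hdD i) ⟨mem_VspR_of_mulVec_eq (mulVec_im_comp_of_mapC_mulVec_eq (h₁ i)),
        mem_VspR_of_mulVec_eq (mulVec_im_comp_of_mapC_mulVec_eq (h₂ i))⟩⟩
  · intro h
    obtain ⟨b, hb⟩ := exists_basis_forall_mem_of_span_eq_top h
    choose d hdD hd using fun i => mem_iUnion₂.1 (hb i)
    obtain ⟨F₁, hF₁⟩ := exists_feedback_of_basis_mem_VspR b (fun i => (d i).1) fun i => (hd i).1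
    obtain ⟨F₂, hF₂⟩ := exists_feedback_of_basis_mem_VspR b (fun i => (d i).2) fun i => (hd i).2
    exact ⟨F₁, F₂, fun i => (((d i).1 : ℂ), ((d i).2 : ℂ)), fun i => Complex.ofReal ∘ b i,
      fun i => mem_image_of_mem _ (hdD i), b.linearIndependent.map_ringHom_comp Complex.ofRealHom,
      fun i => mapC_mulVec_ofReal_comp_of_mulVec_eq (hF₁ i),
      fun i => mapC_mulVec_ofReal_comp_of_mulVec_eq (hF₂ i)⟩

end
end

section
/- Let A_1, A_2 ∈ ℝ^{n×n} and B_1, B_2 ∈ ℝ^{n×p}. Assume there exists α ∈ ℂ^n with α ≠ 0 such that αᵀ · adjugate(λI − A_1) · B_1 = 0 for all λ ∈ ℂ, or there exists α ∈ ℂ^n with α ≠ 0 such that αᵀ · adjugate(μI − A_2) · B_2 = 0 for all μ ∈ ℂ. Then the pairs (A_1,B_1) and (A_2,B_2) are not feedback rectifiable over (ℂ ∖ σ(A_1)) × (ℂ ∖ σ(A_2)), where σ(A) denotes the set of complex eigenvalues of A. -/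
open Matrix

noncomputable section

lemma mapC_add {n m : ℕ} (A B : Matrix (Fin n) (Fin m) ℝ) :
    mapC (A + B) = mapC A + mapC B := by
  simp [mapC, Matrix.map_add]

lemma mapC_mul {n m k : ℕ} (A : Matrix (Fin n) (Fin m) ℝ) (B : Matrix (Fin m) (Fin k) ℝ) :
    mapC (A * B) = mapC A * mapC B := by
  simpa [mapC] using Matrix.map_mul (f := algebraMap ℝ ℂ) (L := A) (M := B)

/-- Key lemma: annihilator kills eigenvectors of closed loop at non-spectrum eigenvalues. -/
lemma key {n p : ℕ} (A : Matrix (Fin n) (Fin n) ℝ) (B : Matrix (Fin n) (Fin p) ℝ)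
    (α : Fin n → ℂ)
    (hα : ∀ l : ℂ, Matrix.vecMul α
      ((l • (1 : Matrix (Fin n) (Fin n) ℂ) - mapC A).adjugate * mapC B) = 0)
    (F : Matrix (Fin p) (Fin n) ℝ) (l : ℂ) (hl : l ∉ spectrum ℂ (mapC A))
    (v : Fin n → ℂ) (hv : (mapC (A + B * F)).mulVec v = l • v) :
    dotProduct α v = 0 := by
  set C : Matrix (Fin n) (Fin n) ℂ := l • (1 : Matrix (Fin n) (Fin n) ℂ) - mapC A with hC
  have hdet : C.det ≠ 0 := by
    rw [spectrum.mem_iff] at hl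
    push_neg at hl
    have halg : (algebraMap ℂ (Matrix (Fin n) (Fin n) ℂ)) l = l • 1 := by
      simp [Algebra.algebraMap_eq_smul_one]
    rw [halg] at hl
    have := (Matrix.isUnit_iff_isUnit_det C).mp hl
    exact this.ne_zero
  -- C.mulVec v = (mapC B * mapC F).mulVec v
  have h1 : C.mulVec v = (mapC B * mapC F).mulVec v := by
    have := hv
    rw [mapC_add, mapC_mul, Matrix.add_mulVec] at this
    rw [hC, Matrix.sub_mulVec, Matrix.smul_mulVec, Matrix.one_mulVec]
    rw [sub_eq_iff_eq_add, ← this]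
    abel
  have h2 : C.det • dotProduct α v = 0 := by
    calc C.det • dotProduct α v
        = dotProduct α (C.det • v) := by
          rw [dotProduct_smul]
      _ = dotProduct α ((C.adjugate * C).mulVec v) := by
          rw [Matrix.adjugate_mul, Matrix.smul_mulVec, Matrix.one_mulVec]
      _ = dotProduct α (C.adjugate.mulVec (C.mulVec v)) := by
          rw [← Matrix.mulVec_mulVec]
      _ = dotProduct α (C.adjugate.mulVec ((mapC B * mapC F).mulVec v)) := by rw [h1]
      _ = dotProduct α ((C.adjugate * (mapC B * mapC F)).mulVec v) := by
          rw [Matrix.mulVec_mulVec]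
      _ = dotProduct (Matrix.vecMul α (C.adjugate * (mapC B * mapC F))) v := by
          rw [Matrix.dotProduct_mulVec]
      _ = dotProduct (Matrix.vecMul (Matrix.vecMul α (C.adjugate * mapC B)) (mapC F)) v := by
          rw [Matrix.vecMul_vecMul, Matrix.mul_assoc]
      _ = 0 := by rw [hα l, Matrix.zero_vecMul, zero_dotProduct]
  have := smul_eq_zero.mp h2
  tauto

lemma alpha_zero {n : ℕ} (α : Fin n → ℂ) (v : Fin n → Fin n → ℂ)
    (hli : LinearIndependent ℂ v) (hd : ∀ i, dotProduct α (v i) = 0) : α = 0 := by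
  have hspan : Submodule.span ℂ (Set.range v) = ⊤ :=
    hli.span_eq_top_of_card_eq_finrank' (by simp)
  let L : (Fin n → ℂ) →ₗ[ℂ] ℂ :=
    { toFun := fun w => dotProduct α w
      map_add' := fun x y => dotProduct_add α x y
      map_smul' := fun c x => by simp [dotProduct_smul] }
  have hL : ∀ w : Fin n → ℂ, L w = 0 := by
    intro w
    have hw : w ∈ Submodule.span ℂ (Set.range v) := hspan ▸ Submodule.mem_top
    induction hw using Submodule.span_induction with
    | mem x hx => obtain ⟨i, rfl⟩ := hx; exact hd i
    | zero => simp
    | add x y _ _ hx hy => simp [map_add, hx, hy]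
    | smul c x _ hx => simp [_root_.map_smul, hx]
  funext j
  have := hL (Pi.single j 1)
  simpa [L, dotProduct_single] using this

/-- If some nonzero `α` annihilates `adj(λI − A₁)B₁` for all `λ`, or annihilates
`adj(μI − A₂)B₂` for all `μ`, then the pairs are not feedback rectifiable over
`(ℂ ∖ σ(A₁)) × (ℂ ∖ σ(A₂))`. -/
theorem not_feedback_rectifiable_of_adjugate_annihilator
    {n p : ℕ} (A₁ A₂ : Matrix (Fin n) (Fin n) ℝ) (B₁ B₂ : Matrix (Fin n) (Fin p) ℝ)
    (h : (∃ α : Fin n → ℂ, α ≠ 0 ∧ ∀ l : ℂ,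
            Matrix.vecMul α ((l • (1 : Matrix (Fin n) (Fin n) ℂ) - mapC A₁).adjugate
              * mapC B₁) = 0) ∨
         (∃ α : Fin n → ℂ, α ≠ 0 ∧ ∀ mu : ℂ,
            Matrix.vecMul α ((mu • (1 : Matrix (Fin n) (Fin n) ℂ) - mapC A₂).adjugate
              * mapC B₂) = 0)) :
    ¬ FeedbackRectifiable A₁ A₂ B₁ B₂
      {d : ℂ × ℂ | d.1 ∉ spectrum ℂ (mapC A₁) ∧ d.2 ∉ spectrum ℂ (mapC A₂)} := by
  rintro ⟨F₁, F₂, lm, v, hD, hli, h1, h2⟩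
  rcases h with ⟨α, hα0, hα⟩ | ⟨α, hα0, hα⟩
  · exact hα0 (alpha_zero α v hli fun i =>
      key A₁ B₁ α hα F₁ (lm i).1 (hD i).1 (v i) (h1 i))
  · exact hα0 (alpha_zero α v hli fun i =>
      key A₂ B₂ α hα F₂ (lm i).2 (hD i).2 (v i) (h2 i))
end
end

section
/- Let 𝔽 be a field, and let K ∈ 𝔽^{n×r₁} and L ∈ 𝔽^{n×r₂}. Then there exist an integer n₁ with 0 ≤ n₁ ≤ n, an invertible matrix R ∈ 𝔽^{n×n}, and matrices K₁ ∈ 𝔽^{n₁×r₁} of full row rank n₁, L₁ ∈ 𝔽^{n₁×r₂}, L₂ ∈ 𝔽^{(n−n₁)×r₂} such that RK equals the block matrix with K₁ on top and the zero matrix below, RL equals the block matrix with L₁ on top and L₂ below, and the intersection of column spaces satisfies range(K) ∩ range(L) = { R⁻¹ w : w ∈ 𝔽^n whose first n₁ coordinates equal L₁x for some x ∈ ker(L₂) and whose last n−n₁ coordinates are zero }. -/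
/-!
Put `n₁ = rank K`. Two subspaces of the same dimension are related by an automorphism
(extend an isomorphism between them by one between complements), so there is an invertible
`R` carrying `range K` onto the coordinate subspace of vectors that vanish beyond the first
`n₁` coordinates. The columns of `R * K` then lie in, and span, that subspace: its lower block
vanishes and its upper block `K₁` has full row rank. A vector `L x` lies in `range K` exactly
when `R * L x` has vanishing lower block `L₂ x`, and then `R * L x = [L₁ x; 0]`.
-/

open Matrix

namespace Fin

variable {α : Type*} {m n : ℕ}

def drop (m : ℕ) (h : m ≤ n) (v : Fin n → α) : Fin (n - m) → α :=
  fun i => v ⟨m + i, by omega⟩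

def padZero [Zero α] (n : ℕ) (v : Fin m → α) : Fin n → α :=
  fun i => if hi : (i : ℕ) < m then v ⟨i, hi⟩ else 0

theorem dite_take_drop (h : m ≤ n) (v : Fin n → α) (i : Fin n) :
    (if hi : (i : ℕ) < m then take m h v ⟨i, hi⟩ else drop m h v ⟨i - m, by omega⟩) = v i := by
  split_ifs with hi
  · rfl
  · exact congrArg v (Fin.ext (by simp only; omega))

theorem take_padZero [Zero α] (h : m ≤ n) (v : Fin m → α) : take m h (padZero n v) = v := by
  ext i
  simp [take, padZero]

theorem drop_padZero [Zero α] (h : m ≤ n) (v : Fin m → α) : drop m h (padZero n v) = 0 := by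
  ext i
  simp [drop, padZero]

theorem padZero_take_of_drop_eq_zero [Zero α] {h : m ≤ n} {v : Fin n → α}
    (hv : drop m h v = 0) : padZero n (take m h v) = v := by
  ext i
  rw [← dite_take_drop h v i, hv]
  rfl

variable (R M : Type*) [Semiring R] [AddCommMonoid M] [Module R M] (m n : ℕ)

def padZeroₗ : (Fin m → M) →ₗ[R] (Fin n → M) where
  toFun := padZero n
  map_add' v w := by ext i; simp only [padZero, Pi.add_apply]; split_ifs <;> simp
  map_smul' c v := by
    ext i; simp only [padZero, Pi.smul_apply, RingHom.id_apply]; split_ifs <;> simp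

variable {R M m n}

@[simp]
theorem padZeroₗ_apply (v : Fin m → M) : padZeroₗ R M m n v = padZero n v := rfl

theorem mem_range_padZeroₗ_iff (h : m ≤ n) {v : Fin n → M} :
    v ∈ LinearMap.range (padZeroₗ R M m n) ↔ drop m h v = 0 := by
  constructor
  · rintro ⟨w, rfl⟩
    exact drop_padZero h w
  · exact fun hv => ⟨take m h v, padZero_take_of_drop_eq_zero hv⟩

theorem finrank_range_padZeroₗ {K : Type*} [DivisionRing K] (h : m ≤ n) :
    Module.finrank K (LinearMap.range (padZeroₗ K K m n)) = m := by
  have hinj : Function.Injective (padZeroₗ K K m n) := fun v w hvw => by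
    simpa only [padZeroₗ_apply, take_padZero] using congrArg (take m h) hvw
  rw [LinearMap.finrank_range_of_inj hinj, Module.finrank_fin_fun]

end Fin

theorem Submodule.exists_linearEquiv_map_eq {K E : Type*} [DivisionRing K] [AddCommGroup E]
    [Module K E] [FiniteDimensional K E] {p q : Submodule K E}
    (h : Module.finrank K p = Module.finrank K q) : ∃ e : E ≃ₗ[K] E, p.map (e : E →ₗ[K] E) = q := by
  obtain ⟨p', hp⟩ := p.exists_isCompl
  obtain ⟨q', hq⟩ := q.exists_isCompl
  have h' : Module.finrank K p' = Module.finrank K q' := by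
    have := p.finrank_add_eq_of_isCompl hp
    have := q.finrank_add_eq_of_isCompl hq
    omega
  let g := LinearEquiv.ofFinrankEq p q h
  let e := (p.prodEquivOfIsCompl p' hp).symm ≪≫ₗ
    (g.prodCongr (LinearEquiv.ofFinrankEq p' q' h')) ≪≫ₗ q.prodEquivOfIsCompl q' hq
  have he : (e : E →ₗ[K] E) ∘ₗ p.subtype = q.subtype ∘ₗ (g : p →ₗ[K] q) := by
    ext x
    simp [e]
  refine ⟨e, ?_⟩
  rw [← p.range_subtype, ← LinearMap.range_comp, he, LinearMap.range_comp_of_range_eq_top _ g.range,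
    q.range_subtype]

namespace Matrix

variable {K : Type*} [Field K]

theorem exists_isUnit_mulVec_mem_iff {ι : Type*} [Fintype ι] [DecidableEq ι]
    {p q : Submodule K (ι → K)} (h : Module.finrank K p = Module.finrank K q) :
    ∃ R : Matrix ι ι K, IsUnit R ∧ ∀ v, R *ᵥ v ∈ q ↔ v ∈ p := by
  obtain ⟨e, he⟩ := Submodule.exists_linearEquiv_map_eq h
  refine ⟨LinearMap.toMatrix' (e : (ι → K) →ₗ[K] ι → K),
    LinearMap.isUnit_toMatrix'_iff.mpr ((Module.End.isUnit_iff _).mpr e.bijective), fun v => ?_⟩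
  rw [LinearMap.toMatrix'_mulVec, ← he, Submodule.mem_map_equiv]
  simp

theorem eq_inv_mulVec_iff {ι : Type*} [Fintype ι] [DecidableEq ι] {R : Matrix ι ι K}
    (hR : IsUnit R) {u w : ι → K} : u = R⁻¹ *ᵥ w ↔ R *ᵥ u = w := by
  have hdet := (isUnit_iff_isUnit_det R).mp hR
  constructor
  · rintro rfl
    rw [mulVec_mulVec, mul_nonsing_inv R hdet, one_mulVec]
  · rintro rfl
    rw [mulVec_mulVec, nonsing_inv_mul R hdet, one_mulVec]

theorem rank_eq_card_of_surjective {m ι : Type*} [Fintype m] [Fintype ι] (M : Matrix m ι K)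
    (hM : Function.Surjective M.mulVec) : M.rank = Fintype.card m := by
  rw [rank, LinearMap.range_eq_top.mpr hM, finrank_top, Module.finrank_fintype_fun_eq_card]

end Matrix

open Fin Matrix in
theorem mem_inf_range_mulVecLin_iff {K : Type*} [Field K] {n m r : ℕ} (h : m ≤ n)
    {R : Matrix (Fin n) (Fin n) K} (hR : IsUnit R) {p : Submodule K (Fin n → K)}
    (hp : ∀ v, v ∈ p ↔ drop m h (R *ᵥ v) = 0) (B : Matrix (Fin n) (Fin r) K) (u : Fin n → K) :
    u ∈ p ⊓ LinearMap.range B.mulVecLin ↔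
      ∃ x, drop m h ((R * B) *ᵥ x) = 0 ∧ u = R⁻¹ *ᵥ padZero n (take m h ((R * B) *ᵥ x)) := by
  simp only [Submodule.mem_inf, LinearMap.mem_range, mulVecLin_apply, ← mulVec_mulVec]
  constructor
  · rintro ⟨hu, x, rfl⟩
    have hx := (hp _).mp hu
    exact ⟨x, hx, (eq_inv_mulVec_iff hR).mpr (padZero_take_of_drop_eq_zero hx).symm⟩
  · rintro ⟨x, hx, rfl⟩
    rw [padZero_take_of_drop_eq_zero hx, ← (eq_inv_mulVec_iff hR).mpr rfl]
    exact ⟨(hp _).mpr hx, x, rfl⟩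

/-- Row reduction of a pair of matrices: there is an invertible `R` bringing `K` to the
form `[K₁; 0]` with `K₁` of full row rank and `L` to `[L₁; L₂]`, and the intersection of
the column spaces of `K` and `L` consists of the vectors `R⁻¹ [L₁ x; 0]` with `x ∈ ker L₂`. -/
theorem intersection_of_column_spaces
    {𝔽 : Type*} [Field 𝔽] {n r₁ r₂ : ℕ}
    (K : Matrix (Fin n) (Fin r₁) 𝔽) (L : Matrix (Fin n) (Fin r₂) 𝔽) :
    ∃ (n₁ : ℕ) (hn₁ : n₁ ≤ n) (R : Matrix (Fin n) (Fin n) 𝔽) (_ : IsUnit R)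
      (K₁ : Matrix (Fin n₁) (Fin r₁) 𝔽) (L₁ : Matrix (Fin n₁) (Fin r₂) 𝔽)
      (L₂ : Matrix (Fin (n - n₁)) (Fin r₂) 𝔽),
      K₁.rank = n₁ ∧
      (∀ (i : Fin n) (j : Fin r₁),
        (R * K) i j = if h : (i : ℕ) < n₁ then K₁ ⟨i, h⟩ j else 0) ∧
      (∀ (i : Fin n) (j : Fin r₂),
        (R * L) i j = if h : (i : ℕ) < n₁ then L₁ ⟨i, h⟩ j
          else L₂ ⟨(i : ℕ) - n₁, by have := i.isLt; omega⟩ j) ∧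
      (∀ u : Fin n → 𝔽,
        (u ∈ LinearMap.range K.mulVecLin ⊓ LinearMap.range L.mulVecLin) ↔
        ∃ x : Fin r₂ → 𝔽, L₂.mulVec x = 0 ∧
          u = R⁻¹.mulVec (fun i => if h : (i : ℕ) < n₁ then L₁.mulVec x ⟨i, h⟩ else 0)) := by
  have hn₁ : K.rank ≤ n := K.rank_le_height
  obtain ⟨R, hR, hRK⟩ := exists_isUnit_mulVec_mem_iff (p := LinearMap.range K.mulVecLin)
    (q := LinearMap.range (Fin.padZeroₗ 𝔽 𝔽 K.rank n)) (Fin.finrank_range_padZeroₗ hn₁).symm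
  have hKmem : ∀ v, v ∈ LinearMap.range K.mulVecLin ↔ Fin.drop _ hn₁ (R *ᵥ v) = 0 := fun v =>
    (hRK v).symm.trans (Fin.mem_range_padZeroₗ_iff hn₁)
  have hdrop : Fin.drop _ hn₁ (R * K) = 0 := ext_iff_mulVec.mpr fun x => by
    change Fin.drop _ hn₁ ((R * K) *ᵥ x) = 0 *ᵥ x
    rw [← mulVec_mulVec, zero_mulVec, ← hKmem]
    exact ⟨x, rfl⟩
  let K₁ : Matrix (Fin K.rank) (Fin r₁) 𝔽 := Fin.take _ hn₁ (R * K)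
  have hsurj : Function.Surjective K₁.mulVec := by
    intro y
    obtain ⟨x, hx : K *ᵥ x = _⟩ := (hKmem (R⁻¹ *ᵥ Fin.padZero n y)).mpr (by
      rw [(eq_inv_mulVec_iff hR).mp rfl]
      exact Fin.drop_padZero hn₁ y)
    refine ⟨x, ?_⟩
    change Fin.take _ hn₁ ((R * K) *ᵥ x) = y
    rw [← mulVec_mulVec, (eq_inv_mulVec_iff hR).mp hx, Fin.take_padZero]
  refine ⟨K.rank, hn₁, R, hR, K₁, Fin.take _ hn₁ (R * L), Fin.drop _ hn₁ (R * L),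
    (rank_eq_card_of_surjective _ hsurj).trans (Fintype.card_fin _), fun i j => ?_,
    fun i j => ?_, mem_inf_range_mulVecLin_iff hn₁ hR hKmem L⟩
  · rw [← Fin.dite_take_drop hn₁ (R * K) i, hdrop]
    split_ifs <;> rfl
  · rw [← Fin.dite_take_drop hn₁ (R * L) i]
    split_ifs <;> rfl
end

section
/- Let 𝔽 be a field, let n₁ ≤ n, and let K ∈ 𝔽^{n×r₁}, L ∈ 𝔽^{n×r₂}. Suppose R ∈ 𝔽^{n×n} is invertible, K₁ ∈ 𝔽^{n₁×r₁} has full row rank n₁, L₁ ∈ 𝔽^{n₁×r₂}, L₂ ∈ 𝔽^{(n−n₁)×r₂}, RK is the block matrix with K₁ on top and zeros below, and RL is the block matrix with L₁ on top and L₂ below. If r₂ > 0 and L₂ has rank r₂ (i.e. L₂ is injective as a linear map), then range(K) ∩ range(L) = {0}. -/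
open Matrix

noncomputable section

/-- If, after row reduction `RK = [K₁; 0]`, `RL = [L₁; L₂]` with `R` invertible and `K₁`
of full row rank, the block `L₂` has full column rank `r₂ > 0` (i.e. is injective), then
the column spaces of `K` and `L` intersect trivially. -/
theorem column_spaces_intersect_trivially
    {𝔽 : Type*} [Field 𝔽] {n n₁ r₁ r₂ : ℕ} (hn₁ : n₁ ≤ n)
    (K : Matrix (Fin n) (Fin r₁) 𝔽) (L : Matrix (Fin n) (Fin r₂) 𝔽)
    (R : Matrix (Fin n) (Fin n) 𝔽) (hR : IsUnit R)
    (K₁ : Matrix (Fin n₁) (Fin r₁) 𝔽) (hK₁ : K₁.rank = n₁)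
    (L₁ : Matrix (Fin n₁) (Fin r₂) 𝔽) (L₂ : Matrix (Fin (n - n₁)) (Fin r₂) 𝔽)
    (hRK : ∀ (i : Fin n) (j : Fin r₁),
      (R * K) i j = if h : (i : ℕ) < n₁ then K₁ ⟨i, h⟩ j else 0)
    (hRL : ∀ (i : Fin n) (j : Fin r₂),
      (R * L) i j = if h : (i : ℕ) < n₁ then L₁ ⟨i, h⟩ j
        else L₂ ⟨(i : ℕ) - n₁, by have := i.isLt; omega⟩ j)
    (hr₂ : 0 < r₂) (hinj : Function.Injective L₂.mulVec) :
    LinearMap.range K.mulVecLin ⊓ LinearMap.range L.mulVecLin = ⊥ := by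
  rw [eq_bot_iff]
  rintro x ⟨⟨y, hy⟩, ⟨z, hz⟩⟩
  simp only [Matrix.mulVecLin_apply] at hy hz
  have hz0 : L₂.mulVec z = 0 := by
    funext i
    have hi : n₁ + (i : ℕ) < n := by have := i.isLt; omega
    set i' : Fin n := ⟨n₁ + i, hi⟩ with hi'
    have h1 : (R * K).mulVec y i' = (R * L).mulVec z i' := by
      rw [← Matrix.mulVec_mulVec, ← Matrix.mulVec_mulVec, hy, hz]
    have h2 : (R * K).mulVec y i' = 0 := by
      simp only [Matrix.mulVec, dotProduct]
      apply Finset.sum_eq_zero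
      intro j _
      rw [hRK]
      rw [dif_neg (by simp [hi'])]
      ring
    have h3 : (R * L).mulVec z i' = L₂.mulVec z i := by
      simp only [Matrix.mulVec, dotProduct]
      apply Finset.sum_congr rfl
      intro j _
      rw [hRL]
      rw [dif_neg (by simp [hi'])]
      congr 1
      congr 1
      simp [hi']
    rw [h1, h3] at h2
    simp [h2]
  have : z = 0 := hinj (by simpa using hz0)
  subst this
  simp only [Submodule.mem_bot]
  rw [← hz]
  simp
end
end

section
/- Let A_1, A_2 ∈ ℝ^{n×n}, B_1, B_2 ∈ ℝ^{n×p}. Let Ω_ℝ ⊆ ℝ×ℝ be dense in ℝ×ℝ, and let P ∈ ℝ[X,Y]^{n×r} be such that for every (λ,μ) ∈ Ω_ℝ the ℝ-linear span of the columns of P(λ,μ) equals V^ℝ_{A_1,B_1}(λ) ∩ V^ℝ_{A_2,B_2}(μ). Write P(λ,μ) = Σ_{k=0}^{N} Σ_{l=0}^{N} C_{kl} λ^k μ^l with coefficient matrices C_{kl} ∈ ℝ^{n×r}. Then the pairs (A_1,B_1) and (A_2,B_2) are feedback rectifiable over Ω_ℝ if and only if the only α ∈ ℝ^n satisfying αᵀC_{kl}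 = 0 for all k, l ∈ {0,…,N} is α = 0. -/
/-!
Both conditions say that the subspaces `V₁(λ) ∩ V₂(μ)`, `(λ, μ) ∈ Ω`, together span `ℝⁿ`.

If `(A₁ + B₁F₁) v = λ v` and `(A₂ + B₂F₂) v = μ v` with real `λ, μ`, then the real and imaginary
parts of `v` lie in `V₁(λ) ∩ V₂(μ)`, so a complex eigenbasis yields a real spanning set. Conversely,
a basis `bᵢ ∈ V₁(λᵢ) ∩ V₂(μᵢ)` comes with `B₁uᵢ = (λᵢ - A₁)bᵢ`, and the feedback defined by
`F₁bᵢ = uᵢ` makes every `bᵢ` an eigenvector of `A₁ + B₁F₁`; likewise for the second pair.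

On the other side, `α` is orthogonal to every `V₁(λ) ∩ V₂(μ) = range P(λ, μ)` with `(λ, μ) ∈ Ω`
iff `αᵀP` vanishes on `Ω`, hence, `Ω` being dense, on all of `ℝ²`, which for a polynomial means
that all its coefficients `αᵀC_{kl}` vanish.
-/

open Matrix

noncomputable section

/-- Entrywise evaluation of a matrix of real polynomials in two variables at a point of `ℝ²`. -/
def evalPR {n r : ℕ} (P : Matrix (Fin n) (Fin r) (MvPolynomial (Fin 2) ℝ)) (lam mu : ℝ) :
    Matrix (Fin n) (Fin r) ℝ :=
  P.map (MvPolynomial.aeval ![lam, mu])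

theorem span_eq_top_iff_forall_dotProduct_eq_zero {K m : Type*} [Field K] [Fintype m]
    {S : Set (m → K)} :
    Submodule.span K S = ⊤ ↔ ∀ α : m → K, (∀ x ∈ S, α ⬝ᵥ x = 0) → α = 0 := by
  classical
  constructor
  · intro hS α hα
    have hle : Submodule.span K S ≤ LinearMap.ker (dotProductBilin K K α) :=
      Submodule.span_le.mpr hα
    rw [hS] at hle
    exact dotProduct_eq_zero_iff.mp fun x => hle Submodule.mem_top
  · intro h
    by_contra hne
    obtain ⟨f, hf0, hle⟩ :=
      (Submodule.span K S).exists_le_ker_of_lt_top (lt_top_iff_ne_top.mpr hne)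
    set α : m → K := fun j => f (Pi.single j 1)
    have hf : f = dotProductBilin K K α := LinearMap.pi_ext fun i c => by
      rw [dotProductBilin_apply_apply, dotProduct_single, mul_comm, ← smul_eq_mul, ← map_smul,
        ← Pi.single_smul, smul_eq_mul, mul_one]
    have hα : α = 0 := h α fun x hx => by
      rw [← dotProductBilin_apply_apply K K, ← hf]
      exact hle (Submodule.subset_span hx)
    exact hf0 (by rw [hf, hα, map_zero])

theorem forall_mem_range_mulVecLin_dotProduct_eq_zero_iff {K m n : Type*} [CommRing K]
    [Fintype m] [Fintype n] (M : Matrix m n K) (α : m → K) :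
    (∀ x ∈ LinearMap.range M.mulVecLin, α ⬝ᵥ x = 0) ↔ α ᵥ* M = 0 := by
  simp [dotProduct_mulVec, dotProduct_eq_zero_iff]

theorem forall_sum_pow_smul_eq_zero_iff {K ι : Type*} [CommRing K] [IsDomain K] [Infinite K]
    {N : ℕ} {c : ℕ → ι → K} :
    (∀ x : K, ∑ k ∈ Finset.range (N + 1), x ^ k • c k = 0) ↔ ∀ k ≤ N, c k = 0 := by
  refine ⟨fun h k hk => funext fun i => ?_, fun h x => Finset.sum_eq_zero fun k hk => by
    rw [h k (Nat.lt_succ_iff.mp (Finset.mem_range.mp hk)), smul_zero]⟩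
  let q : Polynomial K := ∑ j ∈ Finset.range (N + 1), Polynomial.monomial j (c j i)
  have hq : q = 0 := Polynomial.funext fun x => by
    simpa [q, Polynomial.eval_finsetSum, mul_comm] using congrFun (h x) i
  simpa [q, Polynomial.finsetSum_coeff, Polynomial.coeff_monomial, Nat.lt_succ_iff.mpr hk]
    using congrArg (Polynomial.coeff · k) hq

theorem forall_sum_sum_pow_mul_pow_smul_eq_zero_iff {K ι : Type*} [CommRing K] [IsDomain K]
    [Infinite K] {N : ℕ} {c : ℕ → ℕ → ι → K} :
    (∀ x y : K, ∑ k ∈ Finset.range (N + 1), ∑ l ∈ Finset.range (N + 1),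
      (x ^ k * y ^ l) • c k l = 0) ↔ ∀ k l, k ≤ N → l ≤ N → c k l = 0 := by
  have hswap : ∀ x y : K, ∑ k ∈ Finset.range (N + 1), ∑ l ∈ Finset.range (N + 1),
      (x ^ k * y ^ l) • c k l =
        ∑ l ∈ Finset.range (N + 1), y ^ l • ∑ k ∈ Finset.range (N + 1), x ^ k • c k l := by
    intro x y
    rw [Finset.sum_comm]
    simp only [Finset.smul_sum, smul_smul, mul_comm]
  simp only [hswap, forall_sum_pow_smul_eq_zero_iff (c := fun l => ∑ k ∈ _, _ • c k l)]
  calc (∀ x : K, ∀ l ≤ N, ∑ k ∈ Finset.range (N + 1), x ^ k • c k l = 0)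
      ↔ ∀ l ≤ N, ∀ x : K, ∑ k ∈ Finset.range (N + 1), x ^ k • c k l = 0 :=
        ⟨fun h l hl x => h x l hl, fun h x l hl => h l hl x⟩
    _ ↔ ∀ l ≤ N, ∀ k ≤ N, c k l = 0 := by simp only [forall_sum_pow_smul_eq_zero_iff]
    _ ↔ ∀ k l, k ≤ N → l ≤ N → c k l = 0 :=
        ⟨fun h k l hk hl => h l hl k hk, fun h l hl k hk => h k l hk hl⟩

theorem continuous_evalPR {n r : ℕ} (P : Matrix (Fin n) (Fin r) (MvPolynomial (Fin 2) ℝ)) :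
    Continuous fun d : ℝ × ℝ => evalPR P d.1 d.2 := by
  refine continuous_matrix fun i j => ?_
  simp only [evalPR, Matrix.map_apply]
  exact (MvPolynomial.continuous_eval (P i j)).comp (by fun_prop)

theorem mem_VspR_of_mulVec_eq_smul {n p : ℕ} {A : Matrix (Fin n) (Fin n) ℝ}
    {B : Matrix (Fin n) (Fin p) ℝ} {F : Matrix (Fin p) (Fin n) ℝ} {c : ℝ} {v : Fin n → ℝ}
    (hv : (A + B * F) *ᵥ v = c • v) : v ∈ VspR A B c := by
  refine ⟨F *ᵥ v, ?_⟩
  rw [mulVecLin_apply, mulVecLin_apply, mulVec_mulVec, sub_mulVec, smul_mulVec, one_mulVec, ← hv,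
    add_mulVec, add_sub_cancel_left]

theorem exists_feedback_of_basis {ι : Type*} {n p : ℕ} {A : Matrix (Fin n) (Fin n) ℝ}
    {B : Matrix (Fin n) (Fin p) ℝ} (b : Module.Basis ι ℝ (Fin n → ℝ)) (c : ι → ℝ)
    (hb : ∀ i, b i ∈ VspR A B (c i)) :
    ∃ F : Matrix (Fin p) (Fin n) ℝ, ∀ i, (A + B * F) *ᵥ b i = c i • b i := by
  choose u hu using hb
  refine ⟨LinearMap.toMatrix' (b.constr ℝ u), fun i => ?_⟩
  have hu' : B *ᵥ u i = c i • b i - A *ᵥ b i := by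
    simpa [sub_mulVec, smul_mulVec] using hu i
  rw [add_mulVec, ← mulVec_mulVec, LinearMap.toMatrix'_mulVec, Module.Basis.constr_basis, hu',
    add_sub_cancel]

theorem map_mapC_mulVec {n m : ℕ} (g : ℂ →ₗ[ℝ] ℝ) (M : Matrix (Fin n) (Fin m) ℝ)
    (w : Fin m → ℂ) : (fun a => g ((mapC M *ᵥ w) a)) = M *ᵥ fun a => g (w a) := by
  funext a
  simp [mapC, mulVec, dotProduct, ← Complex.real_smul]

theorem mem_VspR_of_mapC_mulVec_eq_smul {n p : ℕ} {A : Matrix (Fin n) (Fin n) ℝ}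
    {B : Matrix (Fin n) (Fin p) ℝ} {F : Matrix (Fin p) (Fin n) ℝ} {c : ℝ} {w : Fin n → ℂ}
    (hw : mapC (A + B * F) *ᵥ w = (c : ℂ) • w) (g : ℂ →ₗ[ℝ] ℝ) :
    (fun a => g (w a)) ∈ VspR A B c := by
  refine mem_VspR_of_mulVec_eq_smul (F := F) ?_
  rw [← map_mapC_mulVec, hw]
  funext a
  simp [← Complex.real_smul]

theorem mapC_mulVec_ofReal_eq_smul {n : ℕ} {M : Matrix (Fin n) (Fin n) ℝ} {c : ℝ}
    {v : Fin n → ℝ} (hv : M *ᵥ v = c • v) :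
    mapC M *ᵥ (fun a => (v a : ℂ)) = (c : ℂ) • fun a => (v a : ℂ) := by
  funext a
  exact (RingHom.map_mulVec Complex.ofRealHom M v a).symm.trans (by simp [hv])

theorem LinearIndependent.map_algebraMap_square {K L m : Type*} [Field K] [Field L] [Algebra K L]
    [Fintype m] [DecidableEq m] {v : m → m → K} (hv : LinearIndependent K v) :
    LinearIndependent L fun i a => algebraMap K L (v i a) :=
  linearIndependent_rows_iff_isUnit.mpr
    ((linearIndependent_rows_iff_isUnit (A := Matrix.of v)).mp hv |>.map
      (algebraMap K L).mapMatrix)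

def commonVspR {n p : ℕ} (A₁ A₂ : Matrix (Fin n) (Fin n) ℝ) (B₁ B₂ : Matrix (Fin n) (Fin p) ℝ)
    (Ω : Set (ℝ × ℝ)) : Set (Fin n → ℝ) :=
  ⋃ d ∈ Ω, ↑(VspR A₁ B₁ d.1 ⊓ VspR A₂ B₂ d.2)

section Rectifiability

variable {n p : ℕ} {A₁ A₂ : Matrix (Fin n) (Fin n) ℝ} {B₁ B₂ : Matrix (Fin n) (Fin p) ℝ}
  {Ω : Set (ℝ × ℝ)}

theorem mem_commonVspR {v : Fin n → ℝ} :
    v ∈ commonVspR A₁ A₂ B₁ B₂ Ω ↔ ∃ d ∈ Ω, v ∈ VspR A₁ B₁ d.1 ∧ v ∈ VspR A₂ B₂ d.2 := by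
  simp only [commonVspR, Set.mem_iUnion₂, SetLike.mem_coe, Submodule.mem_inf, exists_prop]

theorem FeedbackRectifiable.span_eq_top
    (h : FeedbackRectifiable A₁ A₂ B₁ B₂ ((fun x : ℝ × ℝ => ((x.1 : ℂ), (x.2 : ℂ))) '' Ω)) :
    Submodule.span ℝ (commonVspR A₁ A₂ B₁ B₂ Ω) = ⊤ := by
  obtain ⟨F₁, F₂, lm, v, hlm, hv, h₁, h₂⟩ := h
  refine span_eq_top_iff_forall_dotProduct_eq_zero.mpr fun α hα => ?_
  have hαv : ∀ i, (fun a => (α a : ℂ)) ⬝ᵥ v i = 0 := by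
    intro i
    obtain ⟨d, hd, hdi⟩ := hlm i
    have hg : ∀ g : ℂ →ₗ[ℝ] ℝ, α ⬝ᵥ (fun a => g (v i a)) = 0 := fun g =>
      hα _ (mem_commonVspR.mpr ⟨d, hd, mem_VspR_of_mapC_mulVec_eq_smul (by rw [h₁ i, ← hdi]) g,
        mem_VspR_of_mapC_mulVec_eq_smul (by rw [h₂ i, ← hdi]) g⟩)
    apply Complex.ext
    · simpa [dotProduct, Complex.re_sum] using hg Complex.reLm
    · simpa [dotProduct, Complex.im_sum] using hg Complex.imLm
  have hspan : Submodule.span ℂ (Set.range v) = ⊤ :=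
    hv.span_eq_top_of_card_eq_finrank' (by simp)
  have hαℂ := span_eq_top_iff_forall_dotProduct_eq_zero.mp hspan _ (Set.forall_mem_range.mpr hαv)
  funext a
  simpa using congrFun hαℂ a

theorem feedbackRectifiable_of_span_eq_top
    (h : Submodule.span ℝ (commonVspR A₁ A₂ B₁ B₂ Ω) = ⊤) :
    FeedbackRectifiable A₁ A₂ B₁ B₂ ((fun x : ℝ × ℝ => ((x.1 : ℂ), (x.2 : ℂ))) '' Ω) := by
  let b₀ := Module.Basis.ofSpan h.ge
  let b := b₀.reindex (b₀.indexEquiv (Pi.basisFun ℝ (Fin n)))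
  have hb : ∀ i, b i ∈ commonVspR A₁ A₂ B₁ B₂ Ω :=
    fun i => Module.Basis.ofSpan_subset h.ge ⟨_, (b₀.reindex_apply _ i).symm⟩
  choose d hdΩ hbd using fun i => mem_commonVspR.mp (hb i)
  obtain ⟨F₁, hF₁⟩ := exists_feedback_of_basis b (fun i => (d i).1) fun i => (hbd i).1
  obtain ⟨F₂, hF₂⟩ := exists_feedback_of_basis b (fun i => (d i).2) fun i => (hbd i).2
  exact ⟨F₁, F₂, fun i => ((d i).1, (d i).2), fun i a => (b i a : ℂ),
    fun i => ⟨d i, hdΩ i, rfl⟩, b.linearIndependent.map_algebraMap_square,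
    fun i => mapC_mulVec_ofReal_eq_smul (hF₁ i), fun i => mapC_mulVec_ofReal_eq_smul (hF₂ i)⟩

theorem feedbackRectifiable_iff_span_eq_top :
    FeedbackRectifiable A₁ A₂ B₁ B₂ ((fun x : ℝ × ℝ => ((x.1 : ℂ), (x.2 : ℂ))) '' Ω) ↔
      Submodule.span ℝ (commonVspR A₁ A₂ B₁ B₂ Ω) = ⊤ :=
  ⟨FeedbackRectifiable.span_eq_top, feedbackRectifiable_of_span_eq_top⟩

end Rectifiability

theorem forall_mem_dense_vecMul_evalPR_eq_zero_iff {n r N : ℕ} {Ω : Set (ℝ × ℝ)} (hΩ : Dense Ω)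
    {P : Matrix (Fin n) (Fin r) (MvPolynomial (Fin 2) ℝ)} {C : ℕ → ℕ → Matrix (Fin n) (Fin r) ℝ}
    (hC : ∀ lam mu : ℝ, evalPR P lam mu =
      ∑ k ∈ Finset.range (N + 1), ∑ l ∈ Finset.range (N + 1), (lam ^ k * mu ^ l) • C k l)
    (α : Fin n → ℝ) :
    (∀ d ∈ Ω, α ᵥ* evalPR P d.1 d.2 = 0) ↔ ∀ k l, k ≤ N → l ≤ N → α ᵥ* C k l = 0 := by
  have hcont : Continuous fun d : ℝ × ℝ => α ᵥ* evalPR P d.1 d.2 :=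
    continuous_const.matrix_vecMul (continuous_evalPR P)
  calc (∀ d ∈ Ω, α ᵥ* evalPR P d.1 d.2 = 0)
      ↔ ∀ d : ℝ × ℝ, α ᵥ* evalPR P d.1 d.2 = 0 :=
        ⟨fun h => congrFun (hcont.ext_on hΩ continuous_const h), fun h d _ => h d⟩
    _ ↔ ∀ lam mu : ℝ, ∑ k ∈ Finset.range (N + 1), ∑ l ∈ Finset.range (N + 1),
          (lam ^ k * mu ^ l) • α ᵥ* C k l = 0 := by
        simp only [Prod.forall, hC, vecMul_sum, vecMul_smul]
    _ ↔ _ := forall_sum_sum_pow_mul_pow_smul_eq_zero_iff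

/-- Given a dense set `Ω_ℝ ⊆ ℝ × ℝ` and a polynomial matrix `P` whose columns span
`V^ℝ_{A₁,B₁}(λ) ∩ V^ℝ_{A₂,B₂}(μ)` for `(λ,μ) ∈ Ω_ℝ`, with coefficient matrices `C_{kl}`,
the pairs are feedback rectifiable over `Ω_ℝ` iff no nonzero real `α` annihilates all the
coefficient matrices. -/
theorem feedback_rectifiable_real_iff_coeff_kernel
    {n p r N : ℕ} (A₁ A₂ : Matrix (Fin n) (Fin n) ℝ) (B₁ B₂ : Matrix (Fin n) (Fin p) ℝ)
    (Ω : Set (ℝ × ℝ)) (hΩ : Dense Ω)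
    (P : Matrix (Fin n) (Fin r) (MvPolynomial (Fin 2) ℝ))
    (hP : ∀ d ∈ Ω, LinearMap.range (evalPR P d.1 d.2).mulVecLin =
      VspR A₁ B₁ d.1 ⊓ VspR A₂ B₂ d.2)
    (C : ℕ → ℕ → Matrix (Fin n) (Fin r) ℝ)
    (hC : ∀ lam mu : ℝ, evalPR P lam mu =
      ∑ k ∈ Finset.range (N + 1), ∑ l ∈ Finset.range (N + 1), (lam ^ k * mu ^ l) • C k l) :
    FeedbackRectifiable A₁ A₂ B₁ B₂ ((fun x : ℝ × ℝ => ((x.1 : ℂ), (x.2 : ℂ))) '' Ω) ↔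
    (∀ α : Fin n → ℝ, (∀ k l, k ≤ N → l ≤ N → Matrix.vecMul α (C k l) = 0) → α = 0) := by
  rw [feedbackRectifiable_iff_span_eq_top, span_eq_top_iff_forall_dotProduct_eq_zero]
  refine forall_congr' fun α => imp_congr_left ?_
  rw [← forall_mem_dense_vecMul_evalPR_eq_zero_iff hΩ hC]
  refine Set.iUnion₂_subset_iff.trans (forall₂_congr fun d hd => ?_)
  rw [← hP d hd]
  exact forall_mem_range_mulVecLin_dotProduct_eq_zero_iff _ α
end
end

section
/- Let n ≤ 2p and let N_1, N_2 ∈ ℂ^{n×p}. Write N_2 = [N_2′, N_2″] where N_2′ consists of the first n − p columns of N_2 and N_2″ of the remaining 2p − n columns, and suppose the n×n matrix N̂ := [N_1, N_2′] (the columns of N_1 followed by the columns of N_2′) is invertible. Let L₁₂ ∈ ℂ^{p×(2p−n)} be the matrix formed by the first p rows of N̂⁻¹N_2″. Then range(N_1) ∩ range(N_2) = range(N_1 · L₁₂). Moreover, if in addition range(N_1) ∩ range(N_2) ≠ {0}, then L₁₂ ≠ 0. -/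
set_option maxHeartbeats 2000000

open Matrix

noncomputable section

private lemma sum_split {N a b : ℕ} (h : a + b = N) (f : Fin N → ℂ) :
    ∑ j, f j = (∑ j : Fin a, f ⟨(j : ℕ), by have := j.isLt; omega⟩) +
      ∑ j : Fin b, f ⟨a + (j : ℕ), by have := j.isLt; omega⟩ := by
  subst h
  rw [Fin.sum_univ_add]
  congr 1 <;> exact Finset.sum_congr rfl fun j _ => rfl

/-- Let `n ≤ 2p`, `p ≤ n`, and `N₁, N₂ ∈ ℂ^{n×p}`. Split `N₂ = [N₂′, N₂″]` into its first
`n − p` and last `2p − n` columns, and suppose `N̂ := [N₁, N₂′]` is invertible. If `L₁₂`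
is the matrix of the first `p` rows of `N̂⁻¹ N₂″`, then
`range N₁ ∩ range N₂ = range (N₁ L₁₂)`; moreover if this intersection is nontrivial then
`L₁₂ ≠ 0`. -/
theorem intersection_via_echelon
    {n p : ℕ} (hp : p ≤ n) (hn : n ≤ 2 * p)
    (N₁ N₂ : Matrix (Fin n) (Fin p) ℂ)
    (Nhat : Matrix (Fin n) (Fin n) ℂ)
    (hNhat : ∀ (i : Fin n) (j : Fin n),
      Nhat i j = if h : (j : ℕ) < p then N₁ i ⟨j, h⟩
        else N₂ i ⟨(j : ℕ) - p, by have := j.isLt; omega⟩)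
    (hNhatUnit : IsUnit Nhat)
    (N₂'' : Matrix (Fin n) (Fin (2 * p - n)) ℂ)
    (hN₂'' : ∀ (i : Fin n) (j : Fin (2 * p - n)),
      N₂'' i j = N₂ i ⟨(n - p) + (j : ℕ), by have := j.isLt; omega⟩)
    (L₁₂ : Matrix (Fin p) (Fin (2 * p - n)) ℂ)
    (hL₁₂ : ∀ (i : Fin p) (j : Fin (2 * p - n)),
      L₁₂ i j = (Nhat⁻¹ * N₂'') ⟨(i : ℕ), by have := i.isLt; omega⟩ j) :
    (LinearMap.range N₁.mulVecLin ⊓ LinearMap.range N₂.mulVecLin =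
      LinearMap.range (N₁ * L₁₂).mulVecLin) ∧
    (LinearMap.range N₁.mulVecLin ⊓ LinearMap.range N₂.mulVecLin ≠ ⊥ → L₁₂ ≠ 0) := by
  have hdet : IsUnit Nhat.det := (Matrix.isUnit_iff_isUnit_det _).mp hNhatUnit
  set M := Nhat⁻¹ * N₂'' with hM
  have hNM : Nhat * M = N₂'' := Matrix.mul_nonsing_inv_cancel_left _ _ hdet
  -- injectivity of Nhat.mulVec
  have hinj : ∀ w : Fin n → ℂ, Nhat.mulVec w = 0 → w = 0 := by
    intro w hw
    have h := congrArg (Nhat⁻¹.mulVec) hw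
    rwa [Matrix.mulVec_mulVec, Matrix.nonsing_inv_mul _ hdet, Matrix.one_mulVec,
      Matrix.mulVec_zero] at h
  -- splitting Nhat
  have hsplit_n : ∀ (w : Fin n → ℂ),
      Nhat.mulVec w =
        N₁.mulVec (fun j : Fin p => w ⟨(j : ℕ), by have := j.isLt; omega⟩) +
        N₂.mulVec (fun j : Fin p =>
          if h : (j : ℕ) < n - p then w ⟨p + (j : ℕ), by omega⟩ else 0) := by
    intro w
    funext i
    simp only [Matrix.mulVec, dotProduct, Pi.add_apply]
    rw [sum_split (show p + (n - p) = n by omega)]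
    congr 1
    · refine Finset.sum_congr rfl fun j _ => ?_
      rw [hNhat]
      rw [dif_pos (show ((⟨(j : ℕ), by have := j.isLt; omega⟩ : Fin n) : ℕ) < p from j.isLt)]
    · rw [sum_split (show (n - p) + (2 * p - n) = p by omega)
        (f := fun j : Fin p => N₂ i j * if h : (j : ℕ) < n - p then w ⟨p + (j : ℕ), by omega⟩ else 0)]
      have h2 : ∀ j : Fin (2 * p - n),
          N₂ i ⟨(n - p) + (j : ℕ), by have := j.isLt; omega⟩ *
            (if h : (((⟨(n - p) + (j : ℕ), by have := j.isLt; omega⟩ : Fin p)) : ℕ) < n - p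
              then w ⟨p + ((⟨(n - p) + (j : ℕ), by have := j.isLt; omega⟩ : Fin p) : ℕ), by have := j.isLt; omega⟩ else 0) = 0 := by
        intro j
        rw [dif_neg (by simp)]
        ring
      rw [Finset.sum_congr rfl fun j _ => h2 j, Finset.sum_const_zero, add_zero]
      refine Finset.sum_congr rfl fun j _ => ?_
      have hjlt : (j : ℕ) < n - p := j.isLt
      rw [hNhat, dif_neg (by simp), dif_pos (by simpa using hjlt)]
      congr 1
      · congr 1; ext; simp
  -- N₂'' mulVec expressed via N₂
  have hpad : ∀ (x : Fin (2 * p - n) → ℂ),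
      N₂''.mulVec x = N₂.mulVec (fun j : Fin p =>
        if h : (n - p) ≤ (j : ℕ) then x ⟨(j : ℕ) - (n - p), by have := j.isLt; omega⟩ else 0) := by
    intro x
    funext i
    simp only [Matrix.mulVec, dotProduct]
    rw [sum_split (show (n - p) + (2 * p - n) = p by omega)
      (f := fun j : Fin p => N₂ i j *
        if h : (n - p) ≤ (j : ℕ) then x ⟨(j : ℕ) - (n - p), by have := j.isLt; omega⟩ else 0)]
    have h1 : ∀ j : Fin (n - p),
        N₂ i ⟨(j : ℕ), by have := j.isLt; omega⟩ *
          (if h : (n - p) ≤ (((⟨(j : ℕ), by have := j.isLt; omega⟩ : Fin p)) : ℕ)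
            then x ⟨((⟨(j : ℕ), by have := j.isLt; omega⟩ : Fin p) : ℕ) - (n - p), by have := j.isLt; omega⟩ else 0) = 0 := by
      intro j
      rw [dif_neg (by simp; have := j.isLt; omega)]
      ring
    rw [Finset.sum_congr rfl fun j _ => h1 j, Finset.sum_const_zero, zero_add]
    refine Finset.sum_congr rfl fun j _ => ?_
    rw [hN₂'', dif_pos (by simp)]
    congr 1
    · congr 1; ext; simp
  -- splitting N₂.mulVec at column n - p
  have hsplit_p : ∀ (b : Fin p → ℂ),
      N₂.mulVec b = N₂.mulVec (fun j : Fin p => if (j : ℕ) < n - p then b j else 0) +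
        N₂''.mulVec (fun k : Fin (2 * p - n) => b ⟨(n - p) + (k : ℕ), by have := k.isLt; omega⟩) := by
    intro b
    funext i
    simp only [Matrix.mulVec, dotProduct, Pi.add_apply]
    rw [sum_split (show (n - p) + (2 * p - n) = p by omega) (f := fun j : Fin p => N₂ i j * b j),
        sum_split (show (n - p) + (2 * p - n) = p by omega)
          (f := fun j : Fin p => N₂ i j * if (j : ℕ) < n - p then b j else 0)]
    have h2 : ∀ j : Fin (2 * p - n),
        N₂ i ⟨(n - p) + (j : ℕ), by have := j.isLt; omega⟩ *
          (if (((⟨(n - p) + (j : ℕ), by have := j.isLt; omega⟩ : Fin p)) : ℕ) < n - p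
            then b ⟨(n - p) + (j : ℕ), by have := j.isLt; omega⟩ else 0) = 0 := by
      intro j
      rw [if_neg (by simp)]
      ring
    rw [Finset.sum_congr rfl fun j _ => h2 j, Finset.sum_const_zero, add_zero]
    congr 1
    · refine Finset.sum_congr rfl fun j _ => ?_
      rw [if_pos (by simpa using j.isLt)]
    · refine Finset.sum_congr rfl fun j _ => ?_
      rw [hN₂'']
  -- key identity ★
  have hstar : ∀ x : Fin (2 * p - n) → ℂ,
      N₁.mulVec (L₁₂.mulVec x) +
        N₂.mulVec (fun j : Fin p =>
          if h : (j : ℕ) < n - p then M.mulVec x ⟨p + (j : ℕ), by omega⟩ else 0) =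
      N₂''.mulVec x := by
    intro x
    have h := hsplit_n (M.mulVec x)
    rw [Matrix.mulVec_mulVec, hNM] at h
    have eL : (fun j : Fin p => (M.mulVec x) ⟨(j : ℕ), by have := j.isLt; omega⟩) =
        L₁₂.mulVec x := by
      funext j
      simp only [Matrix.mulVec, dotProduct]
      exact Finset.sum_congr rfl fun k _ => by rw [hL₁₂]
    rw [eL] at h
    rw [h]
  have key : LinearMap.range N₁.mulVecLin ⊓ LinearMap.range N₂.mulVecLin =
      LinearMap.range (N₁ * L₁₂).mulVecLin := by
    apply le_antisymm
    · -- inter ≤ range (N₁ * L₁₂)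
      rintro v ⟨⟨a, ha⟩, ⟨b, hb⟩⟩
      simp only [Matrix.mulVecLin_apply] at ha hb ⊢
      set b'' : Fin (2 * p - n) → ℂ :=
        fun k => b ⟨(n - p) + (k : ℕ), by have := k.isLt; omega⟩ with hb''
      set c : Fin p → ℂ := (fun j : Fin p => if (j : ℕ) < n - p then b j else 0) +
        (fun j : Fin p =>
          if h : (j : ℕ) < n - p then M.mulVec b'' ⟨p + (j : ℕ), by omega⟩ else 0) with hc
      have hkey : N₁.mulVec (a - L₁₂.mulVec b'') = N₂.mulVec c := by
        have h1 := hsplit_p b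
        rw [← hstar b''] at h1
        rw [Matrix.mulVec_sub, hc, Matrix.mulVec_add]
        rw [ha, ← hb, h1]
        abel
      -- build w and show it is zero
      set w : Fin n → ℂ := fun j =>
        if h : (j : ℕ) < p then (a - L₁₂.mulVec b'') ⟨(j : ℕ), h⟩
        else -(c ⟨(j : ℕ) - p, by have := j.isLt; omega⟩) with hw
      have hczero : ∀ j : Fin p, ¬ ((j : ℕ) < n - p) → c j = 0 := by
        intro j hj
        simp only [hc, Pi.add_apply]
        rw [if_neg hj, dif_neg hj, add_zero]
      have hw0 : Nhat.mulVec w = 0 := by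
        rw [hsplit_n w]
        have e1 : (fun j : Fin p => w ⟨(j : ℕ), by have := j.isLt; omega⟩) =
            a - L₁₂.mulVec b'' := by
          funext j
          simp only [hw]
          rw [dif_pos j.isLt]
        have e2 : (fun j : Fin p =>
            if h : (j : ℕ) < n - p then w ⟨p + (j : ℕ), by omega⟩ else 0) = -c := by
          funext j
          by_cases hj : (j : ℕ) < n - p
          · rw [dif_pos hj]
            simp only [hw]
            rw [dif_neg (by omega)]
            simp only [Pi.neg_apply]
            congr 2
            ext; simp
          · rw [dif_neg hj]
            simp only [Pi.neg_apply, hczero j hj, neg_zero]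
        rw [e1, e2, hkey, Matrix.mulVec_neg, add_neg_cancel]
      have hwz := hinj w hw0
      have haeq : a = L₁₂.mulVec b'' := by
        funext j
        have := congrFun hwz ⟨(j : ℕ), by have := j.isLt; omega⟩
        simp only [hw, Pi.zero_apply] at this
        rw [dif_pos j.isLt] at this
        have : (a - L₁₂.mulVec b'') j = 0 := this
        simpa [sub_eq_zero] using this
      exact ⟨b'', by rw [Matrix.mulVecLin_apply, ← Matrix.mulVec_mulVec, ← haeq, ha]⟩
    · -- range (N₁ * L₁₂) ≤ inter
      rintro v ⟨x, hx⟩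
      simp only [Matrix.mulVecLin_apply] at hx
      constructor
      · exact ⟨L₁₂.mulVec x, by rw [Matrix.mulVecLin_apply, Matrix.mulVec_mulVec, hx]⟩
      · refine ⟨(fun j : Fin p =>
          if h : (n - p) ≤ (j : ℕ) then x ⟨(j : ℕ) - (n - p), by have := j.isLt; omega⟩ else 0) -
          (fun j : Fin p =>
            if h : (j : ℕ) < n - p then M.mulVec x ⟨p + (j : ℕ), by omega⟩ else 0), ?_⟩
        rw [Matrix.mulVecLin_apply, Matrix.mulVec_sub, ← hpad, ← hstar x, ← hx,
          Matrix.mulVec_mulVec]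
        abel
  refine ⟨key, fun hne hL0 => hne ?_⟩
  rw [key, hL0, Matrix.mul_zero]
  simp [Matrix.mulVecLin_zero]
end
end
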